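/- arXiv:1812.04651 — 5 statements merged into one kernel-verified Lean document; each statement's English description precedes it below -/
import Mathlib

section
/- Let n ≥ 2, let D ⊆ ℝⁿ be an open connected set with μ_D(a,b) > 0 for every pair of distinct points a,b ∈ D, and let x,y ∈ D with x ≠ y. Then the infimum of cap(D, l) over all Jordan arcs l joining x to y in D (i.e., over all sets l = p([0,1]) where p : [0,1] → D is a continuous injective map with p(0) = x and p(1) = y) is equal to μ_D(x,y), the infimum of cap(D, γ) over all compact connected sets γ ⊆ D containing both x and y. -/
open MeasureTheory Metric Set

/-- Conformal capacity of the condenser `(D, K)` in `ℝⁿ`: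
`cap(D,K) = inf ∫_{D∖K} ‖Du‖ⁿ dm` over C¹ functions `u` with compact support in `D`
with `u ≥ 1` on `K` (with `inf ∅ = ∞`). -/
noncomputable def conformalCap (n : ℕ) (D K : Set (EuclideanSpace ℝ (Fin n))) : ENNReal :=
  sInf { e : ENNReal | ∃ u : EuclideanSpace ℝ (Fin n) → ℝ,
    ContDiff ℝ 1 u ∧ HasCompactSupport u ∧ tsupport u ⊆ D ∧
    (∀ x ∈ K, 1 ≤ u x) ∧
    e = ∫⁻ x in D \ K, (‖fderiv ℝ u x‖₊ : ENNReal) ^ n }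

/-- The modulus metric: `μ_D(x,y) = inf cap(D,γ)` over compact connected `γ ⊆ D`
containing `x` and `y`. -/
noncomputable def modMetric (n : ℕ) (D : Set (EuclideanSpace ℝ (Fin n)))
    (x y : EuclideanSpace ℝ (Fin n)) : ENNReal :=
  sInf { e : ENNReal | ∃ γ : Set (EuclideanSpace ℝ (Fin n)),
    IsCompact γ ∧ IsConnected γ ∧ γ ⊆ D ∧ x ∈ γ ∧ y ∈ γ ∧ e = conformalCap n D γ }

/-!
A Jordan arc from `x` to `y` is a continuum through `x` and `y`, so `μ_D(x,y)` is at most the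
infimum over arcs. Conversely, let `u` be admissible for a continuum `γ ∋ x, y` and `0 < a < 1`.
For `a < b < 1`, the component of the open set `{u > b}` containing `γ` contains a Jordan arc `l`
from `x` to `y`. Composing `u` with a `C¹` cutoff which vanishes at `0`, equals `1` above `b` and
has slope at most `a⁻¹` gives a function admissible for `l` whose energy on `D ∖ l` is at most
`a⁻ⁿ ∫_{D ∖ γ} ‖Du‖ⁿ`; let `a → 1`.
-/

/-- Arcs are parametrized by `[0, T]`; allowing `T = 0` makes the relation reflexive. -/
def JoinedByArcIn {E : Type*} [TopologicalSpace E] (A : Set E) (x y : E) : Prop :=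
  ∃ (T : ℝ) (p : ℝ → E), 0 ≤ T ∧ Continuous p ∧ InjOn p (Icc 0 T) ∧ p 0 = x ∧ p T = y ∧
    MapsTo p (Icc 0 T) A

namespace JoinedByArcIn

section Topological

variable {E : Type*} [TopologicalSpace E] {A B : Set E} {x y z : E}

theorem refl (hx : x ∈ A) : JoinedByArcIn A x x :=
  ⟨0, fun _ => x, le_rfl, continuous_const, by simp [InjOn], rfl, rfl, fun _ _ => hx⟩

theorem mem_right (h : JoinedByArcIn A x y) : y ∈ A := by
  obtain ⟨T, p, hT, -, -, -, rfl, hpA⟩ := h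
  exact hpA ⟨hT, le_rfl⟩

theorem mono (h : JoinedByArcIn A x y) (hAB : A ⊆ B) : JoinedByArcIn B x y := by
  obtain ⟨T, p, hT, hp, hinj, hp0, hpT, hpA⟩ := h
  exact ⟨T, p, hT, hp, hinj, hp0, hpT, hpA.mono_right hAB⟩

theorem trans (hxy : JoinedByArcIn A x y) (hyz : JoinedByArcIn B y z) (hAB : A ∩ B ⊆ {y}) :
    JoinedByArcIn (A ∪ B) x z := by
  obtain ⟨S, p, hS, hp, hpinj, hp0, hpS, hpA⟩ := hxy
  obtain ⟨T, r, hT, hr, hrinj, hr0, hrT, hrB⟩ := hyz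
  have hdisj {s t : ℝ} (hs : s ∈ Icc 0 S) (ht : S < t) (htT : t ∈ Icc 0 (S + T))
      (h : p s = r (t - S)) : False := by
    have hmem : t - S ∈ Icc 0 T := ⟨by linarith, by linarith [htT.2]⟩
    have hy : r (t - S) = r 0 := hr0 ▸ hAB ⟨h ▸ hpA hs, hrB hmem⟩
    linarith [hrinj hmem ⟨le_rfl, hT⟩ hy]
  refine ⟨S + T, fun t => if t ≤ S then p t else r (t - S), by linarith,
    hp.if_le (hr.comp (continuous_id.sub continuous_const)) continuous_id continuous_const
      fun t ht => by simp [ht, hpS, hr0], ?_, by simp [hS, hp0], ?_, ?_⟩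
  · intro t₁ h₁ t₂ h₂ h
    dsimp only at h
    split_ifs at h with c₁ c₂ c₂
    · exact hpinj ⟨h₁.1, c₁⟩ ⟨h₂.1, c₂⟩ h
    · exact (hdisj ⟨h₁.1, c₁⟩ (not_le.1 c₂) h₂ h).elim
    · exact (hdisj ⟨h₂.1, c₂⟩ (not_le.1 c₁) h₁ h.symm).elim
    · have := hrinj ⟨by linarith, by linarith [h₁.2]⟩ ⟨by linarith, by linarith [h₂.2]⟩ h
      linarith
  · rcases hT.eq_or_lt with rfl | hT
    · simpa [hpS] using hr0.symm.trans hrT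
    · simp [show ¬ S + T ≤ S by linarith, hrT]
  · intro t ht
    dsimp only
    split_ifs with c
    · exact Or.inl (hpA ⟨ht.1, c⟩)
    · exact Or.inr (hrB ⟨by linarith [not_le.1 c], by linarith [ht.2]⟩)

theorem exists_unitInterval (h : JoinedByArcIn A x y) (hxy : x ≠ y) :
    ∃ p : ℝ → E, Continuous p ∧ InjOn p (Icc 0 1) ∧ p 0 = x ∧ p 1 = y ∧
      MapsTo p (Icc 0 1) A := by
  obtain ⟨T, p, hT, hp, hinj, hp0, hpT, hpA⟩ := h
  have hT : 0 < T := hT.lt_of_ne <| by rintro rfl; exact hxy (hp0 ▸ hpT)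
  have hmaps : MapsTo (T * ·) (Icc (0 : ℝ) 1) (Icc 0 T) := fun t ht =>
    ⟨by nlinarith [ht.1], by nlinarith [ht.2]⟩
  refine ⟨fun t => p (T * t), hp.comp (continuous_const_mul T), ?_, by simpa using hp0,
    by simpa using hpT, hpA.comp hmaps⟩
  exact fun t₁ h₁ t₂ h₂ h => mul_left_cancel₀ hT.ne' (hinj (hmaps h₁) (hmaps h₂) h)

end Topological

section Normed

variable {E : Type*} [NormedAddCommGroup E] [NormedSpace ℝ E] {U : Set E} {x y z w : E}

theorem _root_.joinedByArcIn_segment (hxy : x ≠ y) : JoinedByArcIn (segment ℝ x y) x y := by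
  refine ⟨1, AffineMap.lineMap x y, zero_le_one, AffineMap.lineMap_continuous,
    (AffineMap.lineMap_injective ℝ hxy).injOn, by simp, by simp, ?_⟩
  rw [segment_eq_image_lineMap]
  exact mapsTo_image _ _

/-- Cut the arc at its first point `q` on `[z, w]` and continue along `[q, z]`. -/
theorem of_segment (h : JoinedByArcIn U x w) (hzw : segment ℝ z w ⊆ U) :
    JoinedByArcIn U x z := by
  obtain ⟨T, p, hT, hp, hinj, hp0, hpT, hpU⟩ := h
  have hclosed : IsClosed (segment ℝ z w) := by
    rw [segment_eq_image_lineMap]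
    exact (isCompact_Icc.image AffineMap.lineMap_continuous).isClosed
  set S := Icc 0 T ∩ p ⁻¹' segment ℝ z w
  have hS : IsClosed S := isClosed_Icc.inter (hclosed.preimage hp)
  have hbdd : BddBelow S := ⟨0, fun s hs => hs.1.1⟩
  have hs₀ : sInf S ∈ S :=
    hS.csInf_mem ⟨T, ⟨hT, le_rfl⟩, by simp [hpT, right_mem_segment]⟩ hbdd
  set s₀ := sInf S
  have hfirst : JoinedByArcIn (p '' Icc 0 s₀) x (p s₀) :=
    ⟨s₀, p, hs₀.1.1, hp, hinj.mono (Icc_subset_Icc_right hs₀.1.2), hp0, rfl, mapsTo_image _ _⟩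
  have hfirstU : p '' Icc 0 s₀ ⊆ U := (image_mono (Icc_subset_Icc_right hs₀.1.2)).trans
    hpU.image_subset
  by_cases hz : p s₀ = z
  · exact hz ▸ hfirst.mono hfirstU
  have hqz : segment ℝ (p s₀) z ⊆ segment ℝ z w :=
    (convex_segment z w).segment_subset hs₀.2 (left_mem_segment ℝ z w)
  refine (hfirst.trans (joinedByArcIn_segment hz) ?_).mono
    (union_subset hfirstU (hqz.trans hzw))
  rintro _ ⟨⟨s, hs, rfl⟩, hsq⟩
  have : s₀ ≤ s := csInf_le hbdd ⟨⟨hs.1, hs.2.trans hs₀.1.2⟩, hqz hsq⟩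
  rw [le_antisymm hs.2 this]
  rfl

end Normed

end JoinedByArcIn

theorem IsOpen.joinedByArcIn {E : Type*} [NormedAddCommGroup E] [NormedSpace ℝ E] {U : Set E}
    (hU : IsOpen U) (hconn : IsPreconnected U) {x y : E} (hx : x ∈ U) (hy : y ∈ U) :
    JoinedByArcIn U x y := by
  have hseg {z w : E} {r : ℝ} (hr : ball z r ⊆ U) (hw : w ∈ ball z r) :
      segment ℝ z w ⊆ U ∧ segment ℝ w z ⊆ U := by
    have hz : z ∈ ball z r := mem_ball_self (pos_of_mem_ball hw)
    exact ⟨((convex_ball z r).segment_subset hz hw).trans hr,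
      ((convex_ball z r).segment_subset hw hz).trans hr⟩
  suffices U ⊆ {z | JoinedByArcIn U x z} from this hy
  refine hconn.subset_of_closure_inter_subset ?_ ⟨x, hx, .refl hx⟩ ?_
  · refine Metric.isOpen_iff.2 fun z hz => ?_
    obtain ⟨r, hr, hrU⟩ := Metric.isOpen_iff.1 hU z hz.mem_right
    exact ⟨r, hr, fun w hw => hz.of_segment (hseg hrU hw).2⟩
  · rintro z ⟨hzcl, hzU⟩
    obtain ⟨r, hr, hrU⟩ := Metric.isOpen_iff.1 hU z hzU
    obtain ⟨w, hw, hwz⟩ := Metric.mem_closure_iff.1 hzcl r hr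
    exact hw.of_segment (hseg hrU (mem_ball'.2 hwz)).1

open intervalIntegral in
theorem exists_contDiff_cutoff {a b : ℝ} (ha : 0 < a) (hab : a < b) :
    ∃ φ : ℝ → ℝ, ContDiff ℝ 1 φ ∧ φ 0 = 0 ∧ (∀ t, b ≤ t → φ t = 1 ∧ deriv φ t = 0) ∧
      ∀ t, |deriv φ t| ≤ a⁻¹ := by
  set χ : ℝ → ℝ := fun s => 1 - Real.smoothTransition ((s - a) / (b - a))
  have hχ : Continuous χ := continuous_const.sub <|
    Real.smoothTransition.continuous.comp <| (continuous_id.sub continuous_const).div_const _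
  have hχ_nonneg (s : ℝ) : 0 ≤ χ s := sub_nonneg.2 (Real.smoothTransition.le_one _)
  have hχ_le_one (s : ℝ) : χ s ≤ 1 := sub_le_self _ (Real.smoothTransition.nonneg _)
  have hχ_of_le {s : ℝ} (hs : s ≤ a) : χ s = 1 := by
    simp [χ, Real.smoothTransition.zero_of_nonpos
      (div_nonpos_of_nonpos_of_nonneg (sub_nonpos.2 hs) (sub_pos.2 hab).le)]
  have hχ_of_ge {s : ℝ} (hs : b ≤ s) : χ s = 0 := by
    have : 1 ≤ (s - a) / (b - a) := (one_le_div (sub_pos.2 hab)).2 (by linarith)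
    simp [χ, Real.smoothTransition.one_of_one_le this]
  have hint (s t : ℝ) : IntervalIntegrable χ volume s t := hχ.intervalIntegrable s t
  set A := ∫ s in 0..b, χ s
  have hA : a ≤ A := by
    have h₁ : ∫ s in 0..a, χ s = a := by
      rw [integral_congr (g := fun _ => 1) fun s hs => hχ_of_le (by
        simpa [ha.le] using hs.2)]
      simp
    have h₂ : 0 ≤ ∫ s in a..b, χ s := integral_nonneg hab.le fun s _ => hχ_nonneg s
    linarith [integral_add_adjacent_intervals (hint 0 a) (hint a b)]
  have hAp : 0 < A := ha.trans_le hA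
  set φ : ℝ → ℝ := fun t => (∫ s in 0..t, χ s) / A
  have hφ' (t : ℝ) : HasDerivAt φ (χ t / A) t :=
    (hχ.integral_hasStrictDerivAt 0 t).hasDerivAt.div_const A
  have hderiv : deriv φ = fun t => χ t / A := funext fun t => (hφ' t).deriv
  refine ⟨φ, ?_, by simp [φ], fun t ht => ⟨?_, by simp [hderiv, hχ_of_ge ht]⟩, fun t => ?_⟩
  · rw [contDiff_one_iff_deriv, hderiv]
    exact ⟨fun t => (hφ' t).differentiableAt, hχ.div_const A⟩
  · have : ∫ s in b..t, χ s = 0 := by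
      rw [integral_congr (g := fun _ => 0) fun s hs => hχ_of_ge (by simpa [ht] using hs.1)]
      simp
    simp only [φ]
    rw [← integral_add_adjacent_intervals (hint 0 b) (hint b t), this, add_zero, div_self hAp.ne']
  · rw [hderiv, abs_of_nonneg (div_nonneg (hχ_nonneg t) hAp.le)]
    calc χ t / A ≤ 1 / A := by gcongr; exact hχ_le_one t
      _ ≤ a⁻¹ := by rw [one_div]; exact inv_anti₀ ha hA

open scoped ENNReal

theorem conformalCap_le_ofReal_inv_pow_mul {n : ℕ} (hn : n ≠ 0)
    {D K γ : Set (EuclideanSpace ℝ (Fin n))} {u : EuclideanSpace ℝ (Fin n) → ℝ}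
    (hu : ContDiff ℝ 1 u) (hus : HasCompactSupport u) (huD : tsupport u ⊆ D)
    (huγ : ∀ z ∈ γ, 1 ≤ u z) {a b : ℝ} (ha : 0 < a) (hab : a < b) (hb : b ≤ 1)
    (hK : ∀ z ∈ K, b ≤ u z) :
    conformalCap n D K ≤
      ENNReal.ofReal a⁻¹ ^ n * ∫⁻ z in D \ γ, (‖fderiv ℝ u z‖₊ : ℝ≥0∞) ^ n := by
  obtain ⟨φ, hφ, hφ0, hφ_of_ge, hφ'⟩ := exists_contDiff_cutoff ha hab
  have hv' (z : EuclideanSpace ℝ (Fin n)) :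
      fderiv ℝ (φ ∘ u) z = deriv φ (u z) • fderiv ℝ u z :=
    ((hφ.differentiable one_ne_zero _).hasDerivAt.comp_hasFDerivAt z
      (hu.differentiable one_ne_zero z).hasFDerivAt).fderiv
  have hvγ : ∀ z ∉ D \ γ, fderiv ℝ (φ ∘ u) z = 0 := by
    intro z hz
    rw [hv']
    by_cases hzD : z ∈ D
    · rw [(hφ_of_ge _ (hb.trans (huγ z (not_not.1 fun h => hz ⟨hzD, h⟩)))).2, zero_smul]
    · rw [fderiv_of_notMem_tsupport ℝ fun h => hzD (huD h), smul_zero]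
  have hpt (z : EuclideanSpace ℝ (Fin n)) : (‖fderiv ℝ (φ ∘ u) z‖₊ : ℝ≥0∞) ^ n ≤
      (D \ γ).indicator (fun z => ENNReal.ofReal a⁻¹ ^ n * (‖fderiv ℝ u z‖₊ : ℝ≥0∞) ^ n) z := by
    by_cases hz : z ∈ D \ γ
    · rw [indicator_of_mem hz, ← mul_pow, hv', nnnorm_smul, ENNReal.coe_mul]
      gcongr
      rw [← enorm_eq_nnnorm, ← ofReal_norm]
      exact ENNReal.ofReal_le_ofReal (hφ' _)
    · simp [hvγ z hz, hn]
  calc conformalCap n D K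
      ≤ ∫⁻ z in D \ K, (‖fderiv ℝ (φ ∘ u) z‖₊ : ℝ≥0∞) ^ n :=
        sInf_le ⟨φ ∘ u, hφ.comp hu, hus.comp_left hφ0, (tsupport_comp_subset hφ0 u).trans huD,
          fun z hz => ((hφ_of_ge _ (hK z hz)).1).ge, rfl⟩
    _ ≤ ∫⁻ z, (D \ γ).indicator
          (fun z => ENNReal.ofReal a⁻¹ ^ n * (‖fderiv ℝ u z‖₊ : ℝ≥0∞) ^ n) z :=
        (setLIntegral_le_lintegral _ _).trans (lintegral_mono hpt)
    _ ≤ ∫⁻ z in D \ γ, ENNReal.ofReal a⁻¹ ^ n * (‖fderiv ℝ u z‖₊ : ℝ≥0∞) ^ n :=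
        lintegral_indicator_le _ _
    _ = ENNReal.ofReal a⁻¹ ^ n * ∫⁻ z in D \ γ, (‖fderiv ℝ u z‖₊ : ℝ≥0∞) ^ n :=
        lintegral_const_mul' _ _ (by finiteness)

open Filter Topology in
theorem ENNReal.le_of_forall_lt_one_le_ofReal_inv_pow_mul {x y : ℝ≥0∞} (n : ℕ)
    (h : ∀ a : ℝ, 0 < a → a < 1 → x ≤ ENNReal.ofReal a⁻¹ ^ n * y) : x ≤ y := by
  have hlim : Tendsto (fun a : ℝ => ENNReal.ofReal a⁻¹ ^ n * y) (𝓝[<] 1) (𝓝 y) := by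
    have hc : ContinuousAt (fun a : ℝ => ENNReal.ofReal a⁻¹ ^ n) 1 :=
      (ENNReal.continuous_pow n).continuousAt.comp <|
        ENNReal.continuous_ofReal.continuousAt.comp (continuousAt_inv₀ one_ne_zero)
    simpa using (ENNReal.Tendsto.mul_const hc.tendsto (Or.inl (by simp))).mono_left
      nhdsWithin_le_nhds
  exact ge_of_tendsto hlim <| eventually_of_mem (Ioo_mem_nhdsLT zero_lt_one)
    fun a ha => h a ha.1 ha.2

theorem exists_arc_conformalCap_le {n : ℕ} (hn : n ≠ 0) {D γ : Set (EuclideanSpace ℝ (Fin n))}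
    (hγ : IsPreconnected γ) {x y : EuclideanSpace ℝ (Fin n)} (hxγ : x ∈ γ) (hyγ : y ∈ γ)
    (hxy : x ≠ y) {u : EuclideanSpace ℝ (Fin n) → ℝ} (hu : ContDiff ℝ 1 u)
    (hus : HasCompactSupport u) (huD : tsupport u ⊆ D) (huγ : ∀ z ∈ γ, 1 ≤ u z) {a : ℝ}
    (ha : 0 < a) (ha1 : a < 1) :
    ∃ p : ℝ → EuclideanSpace ℝ (Fin n), Continuous p ∧ InjOn p (Icc 0 1) ∧ p 0 = x ∧ p 1 = y ∧
      p '' Icc 0 1 ⊆ D ∧ conformalCap n D (p '' Icc 0 1) ≤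
        ENNReal.ofReal a⁻¹ ^ n * ∫⁻ z in D \ γ, (‖fderiv ℝ u z‖₊ : ℝ≥0∞) ^ n := by
  obtain ⟨b, hab, hb1⟩ := exists_between ha1
  set U := {z | b < u z}
  have hU : IsOpen U := isOpen_lt continuous_const hu.continuous
  have hγU : γ ⊆ U := fun z hz => show b < u z by linarith [huγ z hz]
  have hUD : U ⊆ D := fun z hz =>
    huD <| subset_tsupport _ <| ne_of_gt <| (ha.trans hab).trans hz
  have hyΩ : y ∈ connectedComponentIn U x := hγ.subset_connectedComponentIn hxγ hγU hyγ
  obtain ⟨p, hp, hinj, hp0, hp1, hpΩ⟩ :=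
    (hU.connectedComponentIn.joinedByArcIn isPreconnected_connectedComponentIn
      (mem_connectedComponentIn (hγU hxγ)) hyΩ).exists_unitInterval hxy
  have hpU : p '' Icc 0 1 ⊆ U := hpΩ.image_subset.trans (connectedComponentIn_subset _ _)
  exact ⟨p, hp, hinj, hp0, hp1, hpU.trans hUD, conformalCap_le_ofReal_inv_pow_mul hn hu hus huD
    huγ ha hab hb1.le fun z hz => (hpU hz).le⟩

theorem modMetric_eq_inf_over_jordan_arcs_general (n : ℕ) (hn : 2 ≤ n)
    (D : Set (EuclideanSpace ℝ (Fin n)))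
    (x y : EuclideanSpace ℝ (Fin n)) (hxy : x ≠ y) :
    sInf { e : ENNReal | ∃ p : ℝ → EuclideanSpace ℝ (Fin n),
        ContinuousOn p (Set.Icc 0 1) ∧ Set.InjOn p (Set.Icc 0 1) ∧
        p 0 = x ∧ p 1 = y ∧ p '' Set.Icc 0 1 ⊆ D ∧
        e = conformalCap n D (p '' Set.Icc 0 1) }
      = modMetric n D x y := by
  refine le_antisymm (le_sInf ?_) (le_sInf ?_)
  · rintro _ ⟨γ, -, hγ, -, hxγ, hyγ, rfl⟩
    refine le_sInf ?_
    rintro _ ⟨u, hu, hus, huD, huγ, rfl⟩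
    refine ENNReal.le_of_forall_lt_one_le_ofReal_inv_pow_mul n fun a ha ha1 => ?_
    obtain ⟨p, hp, hinj, hp0, hp1, hpD, hcap⟩ := exists_arc_conformalCap_le (by omega)
      hγ.isPreconnected hxγ hyγ hxy hu hus huD huγ ha ha1
    exact sInf_le_of_le ⟨p, hp.continuousOn, hinj, hp0, hp1, hpD, rfl⟩ hcap
  · rintro _ ⟨p, hp, -, hp0, hp1, hpD, rfl⟩
    exact sInf_le ⟨p '' Icc 0 1, isCompact_Icc.image_of_continuousOn hp,
      (isConnected_Icc zero_le_one).image p hp, hpD, ⟨0, by simp, hp0⟩, ⟨1, by simp, hp1⟩, rfl⟩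

/-- The infimum of `cap(D,l)` over Jordan arcs `l` joining `x` to `y` in `D` equals the
modulus metric `μ_D(x,y)` (the infimum over compact connected sets containing `x,y`). -/
theorem modMetric_eq_inf_over_jordan_arcs (n : ℕ) (hn : 2 ≤ n)
    (D : Set (EuclideanSpace ℝ (Fin n)))
    (hDopen : IsOpen D) (hDconn : IsConnected D)
    (hμD : ∀ a ∈ D, ∀ b ∈ D, a ≠ b → 0 < modMetric n D a b)
    (x y : EuclideanSpace ℝ (Fin n)) (hx : x ∈ D) (hy : y ∈ D) (hxy : x ≠ y) :
    sInf { e : ENNReal | ∃ p : ℝ → EuclideanSpace ℝ (Fin n),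
        ContinuousOn p (Set.Icc 0 1) ∧ Set.InjOn p (Set.Icc 0 1) ∧
        p 0 = x ∧ p 1 = y ∧ p '' Set.Icc 0 1 ⊆ D ∧
        e = conformalCap n D (p '' Set.Icc 0 1) }
      = modMetric n D x y :=
  modMetric_eq_inf_over_jordan_arcs_general n hn D x y hxy
end

section
/- Let n ≥ 2 and let D ⊆ ℝⁿ be an open connected set with D ≠ ℝⁿ. Then for every triple of points x, y, z ∈ D the triangle inequality holds for the modulus metric: μ_D(x,z) ≤ μ_D(x,y) + μ_D(y,z). -/
open MeasureTheory Metric Set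

/-!
The union of a continuum through `x, y` and one through `y, z` is a continuum through `x, z`, so the
triangle inequality reduces to subadditivity of capacity, `cap(D, K₁ ∪ K₂) ≤ cap(D, K₁) + cap(D, K₂)`.
For admissible `u` (for `K₁`) and `v` (for `K₂`) and `t > 1`, a `C¹` smoothing of `max (t u) (t v)`
that lies above `max (t u) (t v) - (t - 1) / 2` is admissible for `K₁ ∪ K₂`, and its gradient is
pointwise a convex combination of `t ∇u` and `t ∇v`; hence its energy is at most
`tⁿ (∫ ‖∇u‖ⁿ + ∫ ‖∇v‖ⁿ)`, and `t → 1` gives the claim.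
-/

open scoped NNReal ENNReal Topology
open Filter Function

theorem ENNReal.le_sInf_add_sInf {a : ℝ≥0∞} {s t : Set ℝ≥0∞}
    (h : ∀ b ∈ s, ∀ c ∈ t, a ≤ b + c) : a ≤ sInf s + sInf t := by
  simpa only [sInf_eq_iInf] using ENNReal.le_iInf₂_add_iInf₂ h

theorem ENNReal.le_of_forall_one_lt_le_ofReal_pow_mul {a b : ℝ≥0∞} {p : ℕ}
    (h : ∀ t : ℝ, 1 < t → a ≤ ENNReal.ofReal t ^ p * b) : a ≤ b := by
  have hlim : Tendsto (fun t : ℝ => ENNReal.ofReal t ^ p * b) (𝓝[>] 1) (𝓝 b) := by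
    have hcont : Continuous fun t : ℝ => ENNReal.ofReal t ^ p :=
      (ENNReal.continuous_pow p).comp ENNReal.continuous_ofReal
    simpa using ENNReal.Tendsto.mul_const ((hcont.tendsto 1).mono_left nhdsWithin_le_nhds)
      (Or.inl (by simp))
  exact ge_of_tendsto hlim (eventually_nhdsWithin_of_forall h)

/-- `max a b = (a + b + |a - b|) / 2` with `|a - b|` smoothed to `√((a - b) ^ 2 + ε ^ 2)`, shifted
by `ε / 2` so that `(0, 0) ↦ 0` and supports are preserved. -/
noncomputable def smoothMax (ε a b : ℝ) : ℝ :=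
  (a + b + √((a - b) ^ 2 + ε ^ 2) - ε) / 2

section smoothMax

variable {ε : ℝ}

theorem smoothMax_zero_zero (hε : 0 ≤ ε) : smoothMax ε 0 0 = 0 := by
  simp [smoothMax, Real.sqrt_sq hε]

theorem max_sub_half_le_smoothMax (a b : ℝ) : max a b - ε / 2 ≤ smoothMax ε a b := by
  have h : |a - b| ≤ √((a - b) ^ 2 + ε ^ 2) := Real.abs_le_sqrt (le_add_of_nonneg_right (sq_nonneg ε))
  unfold smoothMax
  rcases le_total a b with hab | hab
  · rw [max_eq_right hab]; linarith [neg_abs_le (a - b)]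
  · rw [max_eq_left hab]; linarith [le_abs_self (a - b)]

variable {E : Type*} [NormedAddCommGroup E] [NormedSpace ℝ E] {u v : E → ℝ}

theorem ContDiff.smoothMax {k : WithTop ℕ∞} (hε : ε ≠ 0) (hu : ContDiff ℝ k u)
    (hv : ContDiff ℝ k v) : ContDiff ℝ k fun x => smoothMax ε (u x) (v x) := by
  have hq : ∀ x, (u x - v x) ^ 2 + ε ^ 2 ≠ 0 := fun x => by positivity
  exact ((((hu.add hv).add ((((hu.sub hv).pow 2).add contDiff_const).sqrt hq)).sub
    contDiff_const).div_const 2)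

omit [NormedSpace ℝ E] in
theorem tsupport_smoothMax_subset (hε : 0 ≤ ε) :
    tsupport (fun x => smoothMax ε (u x) (v x)) ⊆ tsupport u ∪ tsupport v := by
  have hsupp : support (fun x => smoothMax ε (u x) (v x)) ⊆ support u ∪ support v := by
    intro x hx
    by_contra h
    simp only [mem_union, mem_support, not_or, not_not] at h
    simp [h.1, h.2, smoothMax_zero_zero hε] at hx
  exact (closure_mono hsupp).trans_eq closure_union

theorem hasFDerivAt_smoothMax {u' v' : E →L[ℝ] ℝ} {x : E} (hε : ε ≠ 0)
    (hu : HasFDerivAt u u' x) (hv : HasFDerivAt v v' x) :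
    ∃ c : ℝ, |c| ≤ 1 ∧ HasFDerivAt (fun y => smoothMax ε (u y) (v y))
      (((1 + c) / 2) • u' + ((1 - c) / 2) • v') x := by
  set q := (u x - v x) ^ 2 + ε ^ 2
  have hq : 0 < q := by positivity
  have hsqrt : 0 < √q := Real.sqrt_pos.2 hq
  refine ⟨(u x - v x) / √q, ?_, ?_⟩
  · rw [abs_div, abs_of_pos hsqrt, div_le_one hsqrt]
    exact Real.abs_le_sqrt (le_add_of_nonneg_right (sq_nonneg ε))
  · have h := (((hu.add hv).add ((((hu.sub hv).pow 2).add_const (ε ^ 2)).sqrt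
      hq.ne')).sub_const ε).const_smul (2⁻¹ : ℝ)
    refine (h.congr_of_eventuallyEq (.of_forall fun y => ?_)).congr_fderiv ?_
    · simp only [smoothMax, Pi.smul_apply, Pi.add_apply, Pi.sub_apply, smul_eq_mul]
      ring
    · ext y
      simp only [Pi.sub_apply, one_div, mul_inv_rev, Nat.add_one_sub_one, pow_one, nsmul_eq_mul,
        Nat.cast_ofNat, smul_add, add_apply, smul_apply, smul_eq_mul, sub_apply]
      field_simp
      ring

theorem norm_fderiv_smoothMax_le {x : E} (hε : ε ≠ 0) (hu : DifferentiableAt ℝ u x)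
    (hv : DifferentiableAt ℝ v x) :
    ‖fderiv ℝ (fun y => smoothMax ε (u y) (v y)) x‖ ≤ max ‖fderiv ℝ u x‖ ‖fderiv ℝ v x‖ := by
  obtain ⟨c, hc, h⟩ := hasFDerivAt_smoothMax hε hu.hasFDerivAt hv.hasFDerivAt
  rw [abs_le] at hc
  rw [h.fderiv, ← mem_closedBall_zero_iff]
  exact convex_closedBall _ _ (mem_closedBall_zero_iff.2 (le_max_left _ _))
    (mem_closedBall_zero_iff.2 (le_max_right _ _)) (by linarith) (by linarith) (by ring)

end smoothMax

section capacity

variable {E : Type*} [NormedAddCommGroup E] [NormedSpace ℝ E]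

structure IsCapAdmissible (D K : Set E) (u : E → ℝ) : Prop where
  contDiff : ContDiff ℝ 1 u
  hasCompactSupport : HasCompactSupport u
  tsupport_subset : tsupport u ⊆ D
  one_le : ∀ x ∈ K, 1 ≤ u x

theorem IsCapAdmissible.union {D K₁ K₂ : Set E} {u v : E → ℝ} {t : ℝ}
    (hu : IsCapAdmissible D K₁ u) (hv : IsCapAdmissible D K₂ v) (ht : 1 < t) :
    IsCapAdmissible D (K₁ ∪ K₂) fun x => smoothMax (t - 1) (t * u x) (t * v x) := by
  have hsupp : tsupport (fun x => smoothMax (t - 1) (t * u x) (t * v x)) ⊆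
      tsupport u ∪ tsupport v :=
    (tsupport_smoothMax_subset (u := fun x => t * u x) (v := fun x => t * v x)
      (by linarith)).trans
      (union_subset_union tsupport_mul_subset_right tsupport_mul_subset_right)
  refine ⟨(contDiff_const.mul hu.contDiff).smoothMax (by linarith)
    (contDiff_const.mul hv.contDiff), ?_, hsupp.trans (union_subset hu.tsupport_subset
    hv.tsupport_subset), fun x hx => ?_⟩
  · exact (hu.hasCompactSupport.isCompact.union hv.hasCompactSupport.isCompact).of_isClosed_subset
      (isClosed_tsupport _) hsupp
  · have hmax : t ≤ max (t * u x) (t * v x) := by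
      rcases hx with hx | hx
      · exact le_max_of_le_left (le_mul_of_one_le_right (by linarith) (hu.one_le x hx))
      · exact le_max_of_le_right (le_mul_of_one_le_right (by linarith) (hv.one_le x hx))
    linarith [max_sub_half_le_smoothMax (ε := t - 1) (t * u x) (t * v x)]

variable [MeasureSpace E]

noncomputable def dirichletEnergy (p : ℕ) (s : Set E) (u : E → ℝ) : ℝ≥0∞ :=
  ∫⁻ x in s, (‖fderiv ℝ u x‖₊ : ℝ≥0∞) ^ p

theorem dirichletEnergy_mono {p : ℕ} {s s' : Set E} (u : E → ℝ) (h : s ⊆ s') :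
    dirichletEnergy p s u ≤ dirichletEnergy p s' u :=
  lintegral_mono_set h

theorem dirichletEnergy_le_of_norm_fderiv_le [OpensMeasurableSpace E] {p : ℕ} {s : Set E}
    {u v w : E → ℝ} {t : ℝ} (ht : 0 ≤ t)
    (h : ∀ x, ‖fderiv ℝ w x‖ ≤ t * max ‖fderiv ℝ u x‖ ‖fderiv ℝ v x‖) :
    dirichletEnergy p s w ≤
      ENNReal.ofReal t ^ p * (dirichletEnergy p s u + dirichletEnergy p s v) := by
  have hpt : ∀ x, (‖fderiv ℝ w x‖₊ : ℝ≥0∞) ^ p ≤ ENNReal.ofReal t ^ p *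
      ((‖fderiv ℝ u x‖₊ : ℝ≥0∞) ^ p + (‖fderiv ℝ v x‖₊ : ℝ≥0∞) ^ p) := by
    intro x
    have hx := ENNReal.ofReal_le_ofReal (h x)
    rw [ENNReal.ofReal_mul ht, ENNReal.ofReal_max] at hx
    simp only [ofReal_norm, enorm_eq_nnnorm] at hx
    calc (‖fderiv ℝ w x‖₊ : ℝ≥0∞) ^ p
        ≤ (ENNReal.ofReal t * max (‖fderiv ℝ u x‖₊ : ℝ≥0∞) ‖fderiv ℝ v x‖₊) ^ p := by gcongr
      _ = ENNReal.ofReal t ^ p * max (‖fderiv ℝ u x‖₊ : ℝ≥0∞) ‖fderiv ℝ v x‖₊ ^ p := mul_pow ..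
      _ ≤ _ := by
        gcongr
        rcases max_cases (‖fderiv ℝ u x‖₊ : ℝ≥0∞) ‖fderiv ℝ v x‖₊ with ⟨hm, -⟩ | ⟨hm, -⟩ <;>
          rw [hm]
        exacts [le_self_add, le_add_self]
  have hmeas : Measurable fun x => (‖fderiv ℝ u x‖₊ : ℝ≥0∞) ^ p :=
    (measurable_fderiv ℝ u).nnnorm.coe_nnreal_ennreal.pow_const p
  calc dirichletEnergy p s w
      ≤ ∫⁻ x in s, ENNReal.ofReal t ^ p *
          ((‖fderiv ℝ u x‖₊ : ℝ≥0∞) ^ p + (‖fderiv ℝ v x‖₊ : ℝ≥0∞) ^ p) := lintegral_mono hpt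
    _ = _ := by
      rw [lintegral_const_mul' _ _ (ENNReal.pow_ne_top ENNReal.ofReal_ne_top),
        lintegral_add_left hmeas]
      rfl

end capacity

section conformalCap

variable {n : ℕ} {D K K₁ K₂ : Set (EuclideanSpace ℝ (Fin n))}

theorem conformalCap_le_dirichletEnergy {u : EuclideanSpace ℝ (Fin n) → ℝ}
    (hu : IsCapAdmissible D K u) : conformalCap n D K ≤ dirichletEnergy n (D \ K) u :=
  sInf_le ⟨u, hu.contDiff, hu.hasCompactSupport, hu.tsupport_subset, hu.one_le, rfl⟩

theorem conformalCap_union_le_mul {u v : EuclideanSpace ℝ (Fin n) → ℝ} {t : ℝ}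
    (hu : IsCapAdmissible D K₁ u) (hv : IsCapAdmissible D K₂ v) (ht : 1 < t) :
    conformalCap n D (K₁ ∪ K₂) ≤
      ENNReal.ofReal t ^ n * (dirichletEnergy n (D \ K₁) u + dirichletEnergy n (D \ K₂) v) := by
  have hderiv : ∀ x, ‖fderiv ℝ (fun y => smoothMax (t - 1) (t * u y) (t * v y)) x‖ ≤
      t * max ‖fderiv ℝ u x‖ ‖fderiv ℝ v x‖ := by
    intro x
    have hux := hu.contDiff.differentiable one_ne_zero x
    have hvx := hv.contDiff.differentiable one_ne_zero x
    calc _ ≤ max ‖fderiv ℝ (fun y => t * u y) x‖ ‖fderiv ℝ (fun y => t * v y) x‖ :=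
          norm_fderiv_smoothMax_le (by linarith) (hux.const_mul t) (hvx.const_mul t)
      _ = t * max ‖fderiv ℝ u x‖ ‖fderiv ℝ v x‖ := by
          rw [fderiv_const_mul hux, fderiv_const_mul hvx, norm_smul, norm_smul,
            Real.norm_of_nonneg (by linarith), mul_max_of_nonneg _ _ (by linarith)]
  calc conformalCap n D (K₁ ∪ K₂)
      ≤ dirichletEnergy n (D \ (K₁ ∪ K₂)) fun y => smoothMax (t - 1) (t * u y) (t * v y) :=
        conformalCap_le_dirichletEnergy (hu.union hv ht)
    _ ≤ ENNReal.ofReal t ^ n *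
          (dirichletEnergy n (D \ (K₁ ∪ K₂)) u + dirichletEnergy n (D \ (K₁ ∪ K₂)) v) :=
        dirichletEnergy_le_of_norm_fderiv_le (by linarith) hderiv
    _ ≤ _ := by
        gcongr <;> exact dirichletEnergy_mono _ (sdiff_subset_sdiff_right (by simp))

theorem conformalCap_union_le :
    conformalCap n D (K₁ ∪ K₂) ≤ conformalCap n D K₁ + conformalCap n D K₂ := by
  refine ENNReal.le_sInf_add_sInf ?_
  rintro _ ⟨u, hu, hcu, hsu, hu1, rfl⟩ _ ⟨v, hv, hcv, hsv, hv1, rfl⟩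
  exact ENNReal.le_of_forall_one_lt_le_ofReal_pow_mul fun t ht =>
    conformalCap_union_le_mul ⟨hu, hcu, hsu, hu1⟩ ⟨hv, hcv, hsv, hv1⟩ ht

end conformalCap

theorem modMetric_triangle_general (n : ℕ)
    (D : Set (EuclideanSpace ℝ (Fin n)))
    (x y z : EuclideanSpace ℝ (Fin n)) :
    modMetric n D x z ≤ modMetric n D x y + modMetric n D y z := by
  refine ENNReal.le_sInf_add_sInf ?_
  rintro _ ⟨γ₁, hγ₁, hγ₁conn, hγ₁D, hxγ₁, hyγ₁, rfl⟩ _ ⟨γ₂, hγ₂, hγ₂conn, hγ₂D, hyγ₂, hzγ₂, rfl⟩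
  calc modMetric n D x z ≤ conformalCap n D (γ₁ ∪ γ₂) :=
        sInf_le ⟨γ₁ ∪ γ₂, hγ₁.union hγ₂, hγ₁conn.union ⟨y, hyγ₁, hyγ₂⟩ hγ₂conn,
          union_subset hγ₁D hγ₂D, Or.inl hxγ₁, Or.inr hzγ₂, rfl⟩
    _ ≤ conformalCap n D γ₁ + conformalCap n D γ₂ := conformalCap_union_le

/-- Triangle inequality for the modulus metric. -/
theorem modMetric_triangle (n : ℕ) (hn : 2 ≤ n)
    (D : Set (EuclideanSpace ℝ (Fin n)))
    (hDopen : IsOpen D) (hDconn : IsConnected D) (hDne : D ≠ Set.univ)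
    (x y z : EuclideanSpace ℝ (Fin n)) (hx : x ∈ D) (hy : y ∈ D) (hz : z ∈ D) :
    modMetric n D x z ≤ modMetric n D x y + modMetric n D y z :=
  modMetric_triangle_general n D x y z
end

section
/- Let n ≥ 2, let x₀ ∈ ℝⁿ and r > 0, and let K ⊆ ℝⁿ∖{x₀} be a nonempty compact connected set. Let K_p be the polarization of K with respect to the sphere S(x₀,r). Then the set K̃_p := K_p ∩ B̄(x₀,r) is nonempty, compact and connected, and moreover K ∩ B̄(x₀,r) ⊆ K̃_p. -/
open MeasureTheory Metric Set

/-- Reflection (inversion) of a point in the sphere `S(x₀,r)`. -/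
noncomputable def sphereReflect (n : ℕ) (x₀ : EuclideanSpace ℝ (Fin n)) (r : ℝ)
    (x : EuclideanSpace ℝ (Fin n)) : EuclideanSpace ℝ (Fin n) :=
  x₀ + (r ^ 2 / ‖x - x₀‖ ^ 2) • (x - x₀)

/-- `E* = {x ≠ x₀ : x* ∈ E}`, the reflection of the set `E` in the sphere `S(x₀,r)`. -/
def sphereDual (n : ℕ) (x₀ : EuclideanSpace ℝ (Fin n)) (r : ℝ)
    (E : Set (EuclideanSpace ℝ (Fin n))) : Set (EuclideanSpace ℝ (Fin n)) :=
  { x | x ≠ x₀ ∧ sphereReflect n x₀ r x ∈ E }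

/-- Polarization of the set `E` with respect to the sphere `S(x₀,r)`:
`E_p = ((E ∪ E*) ∩ B̄(x₀,r)) ∪ ((E ∩ E*) ∖ B̄(x₀,r))`. -/
def polarization (n : ℕ) (x₀ : EuclideanSpace ℝ (Fin n)) (r : ℝ)
    (E : Set (EuclideanSpace ℝ (Fin n))) : Set (EuclideanSpace ℝ (Fin n)) :=
  ((E ∪ sphereDual n x₀ r E) ∩ Metric.closedBall x₀ r) ∪
    ((E ∩ sphereDual n x₀ r E) \ Metric.closedBall x₀ r)

lemma sphereReflect_norm (n : ℕ) (x₀ : EuclideanSpace ℝ (Fin n)) (r : ℝ) (hr : 0 < r)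
    (x : EuclideanSpace ℝ (Fin n)) (hx : x ≠ x₀) :
    ‖sphereReflect n x₀ r x - x₀‖ = r ^ 2 / ‖x - x₀‖ := by
  have hd : ‖x - x₀‖ ≠ 0 := by simpa [sub_eq_zero] using hx
  have hd' : 0 < ‖x - x₀‖ := lt_of_le_of_ne (norm_nonneg _) (Ne.symm hd)
  have hc : 0 < r ^ 2 / ‖x - x₀‖ ^ 2 := div_pos (pow_pos hr 2) (pow_pos hd' 2)
  rw [sphereReflect, add_sub_cancel_left, norm_smul, Real.norm_eq_abs, abs_of_pos hc]
  field_simp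

lemma sphereReflect_sphereReflect (n : ℕ) (x₀ : EuclideanSpace ℝ (Fin n)) (r : ℝ)
    (hr : 0 < r) (x : EuclideanSpace ℝ (Fin n)) (hx : x ≠ x₀) :
    sphereReflect n x₀ r (sphereReflect n x₀ r x) = x := by
  have hd : ‖x - x₀‖ ≠ 0 := by simpa [sub_eq_zero] using hx
  have hd' : 0 < ‖x - x₀‖ := lt_of_le_of_ne (norm_nonneg _) (Ne.symm hd)
  have h1 := sphereReflect_norm n x₀ r hr x hx
  conv_lhs => rw [sphereReflect, h1]
  rw [show sphereReflect n x₀ r x - x₀ = (r ^ 2 / ‖x - x₀‖ ^ 2) • (x - x₀) by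
      rw [sphereReflect, add_sub_cancel_left], smul_smul]
  have : r ^ 2 / (r ^ 2 / ‖x - x₀‖) ^ 2 * (r ^ 2 / ‖x - x₀‖ ^ 2) = 1 := by
    field_simp
  rw [this, one_smul, add_sub_cancel]

lemma sphereReflect_ne (n : ℕ) (x₀ : EuclideanSpace ℝ (Fin n)) (r : ℝ) (hr : 0 < r)
    (x : EuclideanSpace ℝ (Fin n)) (hx : x ≠ x₀) :
    sphereReflect n x₀ r x ≠ x₀ := by
  intro h
  have := sphereReflect_norm n x₀ r hr x hx
  rw [h, sub_self, norm_zero] at this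
  have hd : ‖x - x₀‖ ≠ 0 := by simpa [sub_eq_zero] using hx
  have hd' : 0 < ‖x - x₀‖ := lt_of_le_of_ne (norm_nonneg _) (Ne.symm hd)
  have : 0 < r ^ 2 / ‖x - x₀‖ := div_pos (pow_pos hr 2) hd'
  simp_all

/-- The part of the polarization of a continuum `K` inside the closed ball
`B̄(x₀,r)` is a nonempty compact connected set containing `K ∩ B̄(x₀,r)`. -/
theorem polarization_inter_closedBall_connected (n : ℕ) (hn : 2 ≤ n)
    (x₀ : EuclideanSpace ℝ (Fin n)) (r : ℝ) (hr : 0 < r)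
    (K : Set (EuclideanSpace ℝ (Fin n)))
    (hK : IsCompact K) (hKne : K.Nonempty) (hKconn : IsConnected K)
    (hx₀K : x₀ ∉ K) :
    (polarization n x₀ r K ∩ Metric.closedBall x₀ r).Nonempty ∧
    IsCompact (polarization n x₀ r K ∩ Metric.closedBall x₀ r) ∧
    IsConnected (polarization n x₀ r K ∩ Metric.closedBall x₀ r) ∧
    K ∩ Metric.closedBall x₀ r ⊆ polarization n x₀ r K ∩ Metric.closedBall x₀ r := by
  have hxne : ∀ x ∈ K, x ≠ x₀ := fun x hx h => hx₀K (h ▸ hx)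
  set g : EuclideanSpace ℝ (Fin n) → EuclideanSpace ℝ (Fin n) :=
    fun x => x₀ + min 1 (r ^ 2 / ‖x - x₀‖ ^ 2) • (x - x₀) with hg
  -- g x = x when ‖x - x₀‖ ≤ r
  have hgin : ∀ x, x ≠ x₀ → ‖x - x₀‖ ≤ r → g x = x := by
    intro x hx hle
    have hd : ‖x - x₀‖ ≠ 0 := by simpa [sub_eq_zero] using hx
    have hd' : 0 < ‖x - x₀‖ := lt_of_le_of_ne (norm_nonneg _) (Ne.symm hd)
    have h1 : (1 : ℝ) ≤ r ^ 2 / ‖x - x₀‖ ^ 2 := by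
      rw [le_div_iff₀ (pow_pos hd' 2), one_mul]
      exact pow_le_pow_left₀ (le_of_lt hd') hle 2
    simp [hg, min_eq_left h1]
  -- g x = reflect x when r ≤ ‖x - x₀‖
  have hgout : ∀ x, x ≠ x₀ → r ≤ ‖x - x₀‖ → g x = sphereReflect n x₀ r x := by
    intro x hx hle
    have hd' : 0 < ‖x - x₀‖ := lt_of_lt_of_le hr hle
    have h1 : r ^ 2 / ‖x - x₀‖ ^ 2 ≤ 1 := by
      rw [div_le_one (pow_pos hd' 2)]
      exact pow_le_pow_left₀ (le_of_lt hr) hle 2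
    simp [hg, sphereReflect, min_eq_right h1]
  have hgcont : ContinuousOn g K := by
    have h1 : ContinuousOn (fun x : EuclideanSpace ℝ (Fin n) => r ^ 2 / ‖x - x₀‖ ^ 2) K := by
      apply ContinuousOn.div continuousOn_const
      · exact (Continuous.pow (Continuous.norm (continuous_id.sub continuous_const)) 2).continuousOn
      · intro x hx
        have hd : ‖x - x₀‖ ≠ 0 := by simpa [sub_eq_zero] using hxne x hx
        exact pow_ne_zero 2 hd
    have h2 : ContinuousOn (fun x : EuclideanSpace ℝ (Fin n) => min 1 (r ^ 2 / ‖x - x₀‖ ^ 2)) K :=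
      (continuous_const.min continuous_id).comp_continuousOn h1
    exact continuousOn_const.add (h2.smul
      (continuous_id.sub continuous_const).continuousOn)
  -- key set equality
  have key : polarization n x₀ r K ∩ Metric.closedBall x₀ r = g '' K := by
    ext y
    simp only [polarization, mem_inter_iff, mem_union, mem_diff, mem_image,
      mem_closedBall, dist_eq_norm, sphereDual, mem_setOf_eq]
    constructor
    · rintro ⟨h1, hy⟩
      have h1' : y ∈ K ∨ (y ≠ x₀ ∧ sphereReflect n x₀ r y ∈ K) := by tauto
      rcases h1' with hyK | ⟨hy0, hyR⟩
      · exact ⟨y, hyK, hgin y (hxne y hyK) hy⟩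
      · refine ⟨sphereReflect n x₀ r y, hyR, ?_⟩
        have hnr := sphereReflect_norm n x₀ r hr y hy0
        have hd : ‖y - x₀‖ ≠ 0 := by simpa [sub_eq_zero] using hy0
        have hd' : 0 < ‖y - x₀‖ := lt_of_le_of_ne (norm_nonneg _) (Ne.symm hd)
        have hge : r ≤ ‖sphereReflect n x₀ r y - x₀‖ := by
          rw [hnr, le_div_iff₀ hd']
          calc r * ‖y - x₀‖ ≤ r * r := by nlinarith
          _ = r ^ 2 := by ring
        rw [hgout _ (sphereReflect_ne n x₀ r hr y hy0) hge,
          sphereReflect_sphereReflect n x₀ r hr y hy0]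
    · rintro ⟨x, hxK, rfl⟩
      have hx0 := hxne x hxK
      have hd : ‖x - x₀‖ ≠ 0 := by simpa [sub_eq_zero] using hx0
      have hd' : 0 < ‖x - x₀‖ := lt_of_le_of_ne (norm_nonneg _) (Ne.symm hd)
      rcases le_or_gt ‖x - x₀‖ r with hle | hlt
      · rw [hgin x hx0 hle]
        exact ⟨Or.inl ⟨Or.inl hxK, hle⟩, hle⟩
      · rw [hgout x hx0 hlt.le]
        have hnr := sphereReflect_norm n x₀ r hr x hx0
        have hle' : ‖sphereReflect n x₀ r x - x₀‖ ≤ r := by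
          rw [hnr, div_le_iff₀ hd']
          nlinarith
        refine ⟨Or.inl ⟨Or.inr ⟨sphereReflect_ne n x₀ r hr x hx0, ?_⟩, hle'⟩, hle'⟩
        rw [sphereReflect_sphereReflect n x₀ r hr x hx0]
        exact hxK
  rw [key]
  exact ⟨hKne.image g, hK.image_of_continuousOn hgcont, hKconn.image g hgcont, by
    rintro x ⟨hxK, hxB⟩
    rw [mem_closedBall, dist_eq_norm] at hxB
    exact ⟨x, hxK, hgin x (hxne x hxK) hxB⟩⟩
end

section
/- (Lemma on three spheres.) Let n ≥ 2, let x₀ ∈ ℝⁿ, R > 0 and 0 < k < 1, and let x₁, x₂ ∈ ℝⁿ with |x₁ − x₀| = R and |x₂ − x₀| = kR. Then there exist a point c ∈ ℝⁿ and a radius R₃ > 0 such that: (1) x₁ and x₂ are symmetric with respect to the sphere S(c,R₃), i.e., x₁ ≠ c and x₂ = c + R₃²·(x₁ − c)/|x₁ − c|²; (2) both x₀ and x₂ lie in the closed ball bounded by S(c,R₃), i.e., |x₀ − c| ≤ R₃ and |x₂ − c| ≤ R₃; (3) kR/√(1 + k²) ≤ R₃ ≤ kR/(1 − k). -/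
open Set

/-!
For `0 ≤ μ < 1` let `c` be the point with `x₂ - c = μ² • (x₁ - c)` on the line `x₁x₂`. Then `x₁` and
`x₂` are symmetric in the sphere `S(c, μ‖x₁ - c‖)`, whose radius is `μ/(1 - μ²) · ‖x₁ - x₂‖`, and
its closed ball is the Apollonius ball `{z | ‖z - x₂‖ ≤ μ ‖z - x₁‖}`. As `‖x₀ - x₂‖ = k ‖x₀ - x₁‖`,
this ball contains `x₀` as soon as `k ≤ μ`. Choose `μ` so that the radius is `kR/(1 - k)`; since
`μ/(1 - μ²)` is increasing and `‖x₁ - x₂‖ ≤ (1 + k)R`, the radius for `μ = k` is at most this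
value, so `k ≤ μ`. The lower bound on the radius is then immediate, as `1 - k ≤ √(1 + k²)`.
-/

theorem strictMonoOn_div_one_sub_sq : StrictMonoOn (fun μ : ℝ ↦ μ / (1 - μ ^ 2)) (Ico 0 1) := by
  rintro a ⟨ha0, ha1⟩ b ⟨hb0, hb1⟩ hab
  have : 0 < 1 - a ^ 2 := by nlinarith
  have : 0 < 1 - b ^ 2 := by nlinarith
  rw [div_lt_div_iff₀ (by assumption) (by assumption)]
  nlinarith [mul_nonneg ha0 hb0]

theorem exists_div_one_sub_sq_eq {y : ℝ} (hy : 0 < y) :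
    ∃ μ ∈ Ioo (0 : ℝ) 1, μ / (1 - μ ^ 2) = y := by
  set D := Real.sqrt (1 + 4 * y ^ 2)
  have hD : D ^ 2 = 1 + 4 * y ^ 2 := Real.sq_sqrt (by positivity)
  have h1D : 1 < D := by rw [Real.lt_sqrt zero_le_one]; nlinarith
  have hD1 : D < 1 + 2 * y := by rw [Real.sqrt_lt' (by positivity)]; nlinarith
  have hμ1 : (D - 1) / (2 * y) < 1 := by rw [div_lt_one (by positivity)]; linarith
  have hμ0 : 0 < (D - 1) / (2 * y) := div_pos (sub_pos.2 h1D) (by positivity)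
  refine ⟨(D - 1) / (2 * y), ⟨hμ0, hμ1⟩, ?_⟩
  rw [div_eq_iff (by nlinarith)]
  field_simp
  linear_combination hD

section Apollonius

variable {E : Type*} [NormedAddCommGroup E]

noncomputable def apolloniusRadius (μ : ℝ) (x₁ x₂ : E) : ℝ := μ / (1 - μ ^ 2) * ‖x₁ - x₂‖

theorem apolloniusRadius_le_apolloniusRadius_iff {μ ν : ℝ} (hμ : μ ∈ Ico 0 1) (hν : ν ∈ Ico 0 1)
    {x₁ x₂ : E} (hx : x₁ ≠ x₂) :
    apolloniusRadius μ x₁ x₂ ≤ apolloniusRadius ν x₁ x₂ ↔ μ ≤ ν := by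
  rw [apolloniusRadius, apolloniusRadius, mul_le_mul_iff_left₀ (norm_pos_iff.2 (sub_ne_zero.2 hx))]
  exact strictMonoOn_div_one_sub_sq.le_iff_le hμ hν

variable [InnerProductSpace ℝ E]

theorem norm_sub_sq_smul_sub_mul_norm_sub_sq (u v : E) (μ : ℝ) :
    ‖u - μ ^ 2 • v‖ ^ 2 - μ ^ 2 * ‖u - v‖ ^ 2 = (1 - μ ^ 2) * (‖u‖ ^ 2 - μ ^ 2 * ‖v‖ ^ 2) := by
  rw [norm_sub_sq_real, norm_sub_sq_real, real_inner_smul_right, norm_smul, Real.norm_eq_abs,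
    abs_of_nonneg (sq_nonneg μ)]
  ring

theorem norm_sub_le_mul_norm_sub_iff {c x₁ x₂ z : E} {μ : ℝ} (hμ0 : 0 ≤ μ) (hμ1 : μ < 1)
    (h : x₂ - c = μ ^ 2 • (x₁ - c)) :
    ‖z - c‖ ≤ μ * ‖x₁ - c‖ ↔ ‖z - x₂‖ ≤ μ * ‖z - x₁‖ := by
  have hμ : 0 < 1 - μ ^ 2 := by nlinarith
  have key := norm_sub_sq_smul_sub_mul_norm_sub_sq (z - c) (x₁ - c) μ
  rw [← h, sub_sub_sub_cancel_right, sub_sub_sub_cancel_right] at key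
  rw [← sq_le_sq₀ (norm_nonneg _) (by positivity), ← sq_le_sq₀ (norm_nonneg _) (by positivity),
    mul_pow, mul_pow]
  constructor <;> intro <;> nlinarith

noncomputable def apolloniusCenter (μ : ℝ) (x₁ x₂ : E) : E := x₁ + (1 - μ ^ 2)⁻¹ • (x₂ - x₁)

theorem sub_apolloniusCenter_left (μ : ℝ) (x₁ x₂ : E) :
    x₁ - apolloniusCenter μ x₁ x₂ = (1 - μ ^ 2)⁻¹ • (x₁ - x₂) := by
  rw [apolloniusCenter, sub_add_cancel_left, ← smul_neg, neg_sub]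

theorem sub_apolloniusCenter_right {μ : ℝ} (hμ : μ ^ 2 ≠ 1) (x₁ x₂ : E) :
    x₂ - apolloniusCenter μ x₁ x₂ = μ ^ 2 • (x₁ - apolloniusCenter μ x₁ x₂) := by
  have h : (1 - μ ^ 2)⁻¹ * (1 - μ ^ 2) = 1 := inv_mul_cancel₀ (sub_ne_zero.2 hμ.symm)
  rw [sub_apolloniusCenter_left, smul_smul, apolloniusCenter]
  linear_combination (norm := module) h • (x₁ - x₂)

theorem norm_sub_apolloniusCenter_left {μ : ℝ} (hμ : μ ^ 2 < 1) (x₁ x₂ : E) :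
    ‖x₁ - apolloniusCenter μ x₁ x₂‖ = ‖x₁ - x₂‖ / (1 - μ ^ 2) := by
  rw [sub_apolloniusCenter_left, norm_smul, norm_inv, Real.norm_of_nonneg (by linarith),
    inv_mul_eq_div]

theorem apolloniusCenter_ne_left {μ : ℝ} (hμ : μ ^ 2 < 1) {x₁ x₂ : E} (hx : x₁ ≠ x₂) :
    x₁ ≠ apolloniusCenter μ x₁ x₂ := by
  rw [← sub_ne_zero, ← norm_pos_iff, norm_sub_apolloniusCenter_left hμ]
  exact div_pos (norm_pos_iff.2 (sub_ne_zero.2 hx)) (by linarith)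

theorem apolloniusRadius_eq_mul_norm_sub_apolloniusCenter {μ : ℝ} (hμ : μ ^ 2 < 1) (x₁ x₂ : E) :
    apolloniusRadius μ x₁ x₂ = μ * ‖x₁ - apolloniusCenter μ x₁ x₂‖ := by
  rw [norm_sub_apolloniusCenter_left hμ, apolloniusRadius, div_mul_eq_mul_div, mul_div_assoc]

theorem eq_apolloniusCenter_add_smul {μ : ℝ} (hμ : μ ^ 2 < 1) {x₁ x₂ : E} (hx : x₁ ≠ x₂) :
    x₂ = apolloniusCenter μ x₁ x₂ + (apolloniusRadius μ x₁ x₂ ^ 2 /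
      ‖x₁ - apolloniusCenter μ x₁ x₂‖ ^ 2) • (x₁ - apolloniusCenter μ x₁ x₂) := by
  have hc := norm_ne_zero_iff.2 (sub_ne_zero.2 (apolloniusCenter_ne_left hμ hx))
  rw [apolloniusRadius_eq_mul_norm_sub_apolloniusCenter hμ, mul_pow, mul_div_assoc,
    div_self (pow_ne_zero 2 hc), mul_one, ← sub_apolloniusCenter_right hμ.ne, add_sub_cancel]

theorem norm_sub_apolloniusCenter_le_iff {μ : ℝ} (hμ0 : 0 ≤ μ) (hμ1 : μ < 1) (x₁ x₂ z : E) :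
    ‖z - apolloniusCenter μ x₁ x₂‖ ≤ apolloniusRadius μ x₁ x₂ ↔ ‖z - x₂‖ ≤ μ * ‖z - x₁‖ := by
  have hμ : μ ^ 2 < 1 := by nlinarith
  rw [apolloniusRadius_eq_mul_norm_sub_apolloniusCenter hμ]
  exact norm_sub_le_mul_norm_sub_iff hμ0 hμ1 (sub_apolloniusCenter_right hμ.ne x₁ x₂)

end Apollonius

theorem three_spheres_lemma_general (n : ℕ)
    (x₀ x₁ x₂ : EuclideanSpace ℝ (Fin n))
    (R k : ℝ) (hR : 0 < R) (hk0 : 0 < k) (hk1 : k < 1)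
    (h1 : ‖x₁ - x₀‖ = R) (h2 : ‖x₂ - x₀‖ = k * R) :
    ∃ (c : EuclideanSpace ℝ (Fin n)) (R₃ : ℝ), 0 < R₃ ∧
      x₁ ≠ c ∧ x₂ = c + (R₃ ^ 2 / ‖x₁ - c‖ ^ 2) • (x₁ - c) ∧
      ‖x₀ - c‖ ≤ R₃ ∧ ‖x₂ - c‖ ≤ R₃ ∧
      k * R / Real.sqrt (1 + k ^ 2) ≤ R₃ ∧ R₃ ≤ k * R / (1 - k) := by
  have hx : x₁ ≠ x₂ := fun h ↦ by rw [← h, h1] at h2; nlinarith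
  have hd_pos : 0 < ‖x₁ - x₂‖ := norm_pos_iff.2 (sub_ne_zero.2 hx)
  have hk1' : 0 < 1 - k := sub_pos.2 hk1
  have hd_le : ‖x₁ - x₂‖ ≤ (1 + k) * R := by
    linarith [norm_sub_le_norm_sub_add_norm_sub x₁ x₀ x₂, norm_sub_rev x₀ x₂]
  obtain ⟨μ, ⟨hμ0, hμ1⟩, hμ⟩ :=
    exists_div_one_sub_sq_eq (y := k * R / (1 - k) / ‖x₁ - x₂‖) (by positivity)
  have hr : apolloniusRadius μ x₁ x₂ = k * R / (1 - k) := by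
    rw [apolloniusRadius, hμ, div_mul_cancel₀ _ hd_pos.ne']
  have hkμ : k ≤ μ := by
    refine (apolloniusRadius_le_apolloniusRadius_iff ⟨hk0.le, hk1⟩ ⟨hμ0.le, hμ1⟩ hx).1 ?_
    have hk2 : 0 < 1 - k ^ 2 := by nlinarith
    calc apolloniusRadius k x₁ x₂ ≤ k / (1 - k ^ 2) * ((1 + k) * R) := by
          rw [apolloniusRadius]; gcongr
      _ = apolloniusRadius μ x₁ x₂ := by rw [hr]; field_simp; ring
  have hball := norm_sub_apolloniusCenter_le_iff hμ0.le hμ1 x₁ x₂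
  have hμ2 : μ ^ 2 < 1 := by nlinarith
  refine ⟨apolloniusCenter μ x₁ x₂, apolloniusRadius μ x₁ x₂, ?_, apolloniusCenter_ne_left hμ2 hx,
    eq_apolloniusCenter_add_smul hμ2 hx, ?_, ?_, ?_, hr.le⟩
  · rw [hr]; positivity
  · rw [hball, norm_sub_rev, h2, norm_sub_rev, h1]
    gcongr
  · rw [hball, sub_self, norm_zero]
    positivity
  · rw [hr]
    refine div_le_div_of_nonneg_left (by positivity) (by linarith) ?_
    linarith [Real.one_le_sqrt.2 (le_add_of_nonneg_right (sq_nonneg k))]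

/-- Lemma on three spheres: for `x₁` on the sphere `S(x₀,R)` and `x₂` on the sphere
`S(x₀,kR)` there is a sphere `S(c,R₃)` with respect to which `x₁` and `x₂` are symmetric,
whose closed ball contains `x₀` and `x₂`, and whose radius satisfies
`kR/√(1+k²) ≤ R₃ ≤ kR/(1−k)`. -/
theorem three_spheres_lemma (n : ℕ) (hn : 2 ≤ n)
    (x₀ x₁ x₂ : EuclideanSpace ℝ (Fin n))
    (R k : ℝ) (hR : 0 < R) (hk0 : 0 < k) (hk1 : k < 1)
    (h1 : ‖x₁ - x₀‖ = R) (h2 : ‖x₂ - x₀‖ = k * R) :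
    ∃ (c : EuclideanSpace ℝ (Fin n)) (R₃ : ℝ), 0 < R₃ ∧
      x₁ ≠ c ∧ x₂ = c + (R₃ ^ 2 / ‖x₁ - c‖ ^ 2) • (x₁ - c) ∧
      ‖x₀ - c‖ ≤ R₃ ∧ ‖x₂ - c‖ ≤ R₃ ∧
      k * R / Real.sqrt (1 + k ^ 2) ≤ R₃ ∧ R₃ ≤ k * R / (1 - k) :=
  three_spheres_lemma_general n x₀ x₁ x₂ R k hR hk0 hk1 h1 h2
end

section
/- Fix k with 0 < k < 1 and define, for θ ∈ [0, π − arctan(1/k)], R₃(θ) := √( (k²/(√(1 − k²·sin²θ) − k·cosθ) + k·cosθ)² + k²·sin²θ ); here the denominator √(1 − k²·sin²θ) − k·cosθ is positive for all such θ. Then R₃ is strictly decreasing on [0, π − arctan(1/k)], with R₃(0) = k/(1 − k) and R₃(π − arctan(1/k)) = k/√(1 + k²); in particular, for θ ∈ [0, π/2] one has k/√(1 − k²) ≤ R₃(θ) ≤ k/(1 − k). -/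
/-!
Writing `D θ = √(1 - k² sin² θ) - k cos θ`, one has `(D + k cos θ)² = 1 - k² sin² θ`, i.e.
`D² + 2 k cos θ · D = 1 - k²`, and this collapses the radius to `R₃ θ = k / D θ`.
Since `1 - k² sin² θ = (1 - k²) + (k cos θ)²`, `D θ = g (k cos θ)` with `g x = √(a + x²) - x`,
`a = 1 - k² > 0`, which is positive and strictly decreasing. Hence `D` increases and `R₃`
decreases on `[0, π]`, and the bounds are the values at the end points `0`, `π / 2` and
`π - arctan (1 / k)`.
-/

open Real Set

lemma sqrt_add_sq_sub_pos {a : ℝ} (ha : 0 < a) (x : ℝ) : 0 < √(a + x ^ 2) - x := by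
  have : |x| < √(a + x ^ 2) := by
    rw [← sqrt_sq_eq_abs]
    exact sqrt_lt_sqrt (sq_nonneg _) (by linarith)
  linarith [le_abs_self x]

lemma strictAnti_sqrt_add_sq_sub {a : ℝ} (ha : 0 < a) :
    StrictAnti fun x : ℝ => √(a + x ^ 2) - x := by
  intro x y hxy
  have hx := sqrt_add_sq_sub_pos ha x
  have hsq : √(a + x ^ 2) ^ 2 = a + x ^ 2 := sq_sqrt (by positivity)
  -- squaring `√(a + y²) < √(a + x²) + (y - x)` leaves `0 < 2 (y - x) (√(a + x²) - x)`
  suffices √(a + y ^ 2) < √(a + x ^ 2) + (y - x) by linarith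
  rw [sqrt_lt' (by linarith [sqrt_nonneg (a + x ^ 2)])]
  nlinarith [mul_pos (sub_pos.mpr hxy) hx]

lemma one_sub_sq_mul_sin_sq (k θ : ℝ) :
    1 - k ^ 2 * sin θ ^ 2 = (1 - k ^ 2) + (k * cos θ) ^ 2 := by
  rw [sin_sq]; ring

lemma sq_div_add_mul_sq_add_sq {k c s D : ℝ} (hD : D ≠ 0) (hsc : s ^ 2 + c ^ 2 = 1)
    (h : (D + k * c) ^ 2 = 1 - k ^ 2 * s ^ 2) :
    (k ^ 2 / D + k * c) ^ 2 + k ^ 2 * s ^ 2 = (k / D) ^ 2 := by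
  field_simp
  linear_combination k ^ 2 * h + k ^ 2 * (D ^ 2 - k ^ 2) * hsc

noncomputable def R3Denom (k θ : ℝ) : ℝ := √(1 - k ^ 2 * sin θ ^ 2) - k * cos θ

namespace R3Denom

lemma pos {k : ℝ} (hk : k ^ 2 < 1) (θ : ℝ) : 0 < R3Denom k θ := by
  rw [R3Denom, one_sub_sq_mul_sin_sq]
  exact sqrt_add_sq_sub_pos (by linarith) _

lemma strictMonoOn {k : ℝ} (hk0 : 0 < k) (hk : k ^ 2 < 1) :
    StrictMonoOn (R3Denom k) (Icc 0 π) := by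
  intro θ₁ h₁ θ₂ h₂ hlt
  simp only [R3Denom, one_sub_sq_mul_sin_sq]
  exact strictAnti_sqrt_add_sq_sub (by linarith)
    (mul_lt_mul_of_pos_left (strictAntiOn_cos h₁ h₂ hlt) hk0)

lemma sqrt_sq_div_add_mul_cos_sq_add_sq {k : ℝ} (hk0 : 0 ≤ k) (hk : k ^ 2 < 1) (θ : ℝ) :
    √((k ^ 2 / R3Denom k θ + k * cos θ) ^ 2 + k ^ 2 * sin θ ^ 2) = k / R3Denom k θ := by
  have hD := pos hk θ
  have hroot : (R3Denom k θ + k * cos θ) ^ 2 = 1 - k ^ 2 * sin θ ^ 2 := by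
    rw [R3Denom, sub_add_cancel, sq_sqrt (by rw [one_sub_sq_mul_sin_sq]; nlinarith)]
  rw [sq_div_add_mul_sq_add_sq hD.ne' (sin_sq_add_cos_sq θ) hroot, sqrt_sq (by positivity)]

lemma zero (k : ℝ) : R3Denom k 0 = 1 - k := by
  simp [R3Denom]

lemma pi_div_two (k : ℝ) : R3Denom k (π / 2) = √(1 - k ^ 2) := by
  simp [R3Denom]

lemma pi_sub_arctan_one_div {k : ℝ} (hk0 : 0 < k) :
    R3Denom k (π - arctan (1 / k)) = √(1 + k ^ 2) := by
  have hu : 0 < √(1 + k ^ 2) := by positivity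
  have hu2 : √(1 + k ^ 2) ^ 2 = 1 + k ^ 2 := sq_sqrt (by positivity)
  have hinv : √(1 + (1 / k) ^ 2) = √(1 + k ^ 2) / k := by
    rw [show 1 + (1 / k) ^ 2 = (1 + k ^ 2) / k ^ 2 by field_simp; ring, sqrt_div' _ (by positivity),
      sqrt_sq hk0.le]
  have hrad : 1 - k ^ 2 * (1 / √(1 + k ^ 2)) ^ 2 = (1 / √(1 + k ^ 2)) ^ 2 := by
    field_simp; linear_combination hu2
  rw [R3Denom, sin_pi_sub, cos_pi_sub, sin_arctan, cos_arctan, hinv,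
    show 1 / k / (√(1 + k ^ 2) / k) = 1 / √(1 + k ^ 2) by field_simp, hrad,
    sqrt_sq (by positivity)]
  field_simp
  linear_combination -hu2

end R3Denom

/-- Monotonicity and bounds for the radius `R₃(θ)` from the three-spheres construction,
case `θ ∈ [0, π − arctan(1/k)]`. -/
theorem R3_strictAnti_and_bounds (k : ℝ) (hk0 : 0 < k) (hk1 : k < 1)
    (R₃ : ℝ → ℝ)
    (hR₃ : ∀ θ : ℝ, R₃ θ =
      Real.sqrt ((k ^ 2 / (Real.sqrt (1 - k ^ 2 * Real.sin θ ^ 2) - k * Real.cos θ)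
          + k * Real.cos θ) ^ 2 + k ^ 2 * Real.sin θ ^ 2)) :
    (∀ θ ∈ Set.Icc (0 : ℝ) (Real.pi - Real.arctan (1 / k)),
        0 < Real.sqrt (1 - k ^ 2 * Real.sin θ ^ 2) - k * Real.cos θ) ∧
    StrictAntiOn R₃ (Set.Icc (0 : ℝ) (Real.pi - Real.arctan (1 / k))) ∧
    R₃ 0 = k / (1 - k) ∧
    R₃ (Real.pi - Real.arctan (1 / k)) = k / Real.sqrt (1 + k ^ 2) ∧
    (∀ θ ∈ Set.Icc (0 : ℝ) (Real.pi / 2),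
        k / Real.sqrt (1 - k ^ 2) ≤ R₃ θ ∧ R₃ θ ≤ k / (1 - k)) := by
  have hk : k ^ 2 < 1 := by nlinarith
  have hR : ∀ θ, R₃ θ = k / R3Denom k θ := fun θ =>
    (hR₃ θ).trans (R3Denom.sqrt_sq_div_add_mul_cos_sq_add_sq hk0.le hk θ)
  have hanti : StrictAntiOn R₃ (Icc 0 π) := fun θ₁ h₁ θ₂ h₂ hlt => by
    rw [hR, hR]
    exact div_lt_div_of_pos_left hk0 (R3Denom.pos hk θ₁) (R3Denom.strictMonoOn hk0 hk h₁ h₂ hlt)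
  have harctan : 0 < arctan (1 / k) := arctan_pos.mpr (by positivity)
  have hhalf : π / 2 ≤ π - arctan (1 / k) := by linarith [arctan_lt_pi_div_two (1 / k)]
  refine ⟨fun θ _ => R3Denom.pos hk θ, hanti.mono (Icc_subset_Icc_right (by linarith)),
    by rw [hR, R3Denom.zero], by rw [hR, R3Denom.pi_sub_arctan_one_div hk0], ?_⟩
  rintro θ ⟨hθ0, hθ⟩
  have mem : ∀ {t}, 0 ≤ t → t ≤ π / 2 → t ∈ Icc 0 π := fun h0 h1 => ⟨h0, by linarith [pi_pos]⟩
  constructor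
  · rw [← R3Denom.pi_div_two, ← hR]
    exact hanti.antitoneOn (mem hθ0 hθ) (mem (by positivity) le_rfl) hθ
  · rw [← R3Denom.zero, ← hR]
    exact hanti.antitoneOn (mem le_rfl (by positivity)) (mem hθ0 hθ) hθ0
end
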